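/- arXiv:0802.2128 — 2 statements merged into one kernel-verified Lean document; each statement's English description precedes it below -/
import Mathlib

section
/- The map F defined on teams by F(V) = (𝒫(V), 𝒫(^N A \ V)) is a bijection from 𝒫(^N A) onto the set of perfect double suits over A and N, and it satisfies: F(∅) = 0; F(^N A) = 1; F({a ∈ ^N A : a_i = a_j}) = D_ij for all i, j < N; F(^N A \ V) = ¬F(V); F(V ∪ W) = F(V) +_∅ F(W); F(V ∩ W) = F(V) ·_∅ F(W); and F(V(n:A)) = C_{n,∅}(F(V)) for all n < N. (Hence the N-dimensional cylindric set algebra over A is isomorphic to the algebra of perfect double suits under the ∅-operations.) -/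
/-- A team: a set of valuations `Fin N → A`. -/
abbrev Team (A : Type*) (N : ℕ) := Set (Fin N → A)

/-- A pair of collections of teams. -/
abbrev TPair (A : Type*) (N : ℕ) := Set (Team A N) × Set (Team A N)

/-- A suit: a nonempty collection of teams closed under subsets. -/
def IsSuit {A : Type*} {N : ℕ} (S : Set (Team A N)) : Prop :=
  S.Nonempty ∧ ∀ ⦃V V' : Team A N⦄, V ∈ S → V' ⊆ V → V' ∈ S

/-- A double suit: a pair of suits whose intersection is `{∅}`. -/
def IsDoubleSuit {A : Type*} {N : ℕ} (X : TPair A N) : Prop :=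
  IsSuit X.1 ∧ IsSuit X.2 ∧ X.1 ∩ X.2 = {∅}

/-- The pair `(𝒫(V), 𝒫(^N A \ V))`. -/
def perfPair {A : Type*} {N : ℕ} (V : Team A N) : TPair A N :=
  (Set.powerset V, Set.powerset Vᶜ)

/-- A pair is perfect if it equals `(𝒫(V), 𝒫(^N A \ V))` for some team `V`. -/
def IsPerfect {A : Type*} {N : ℕ} (X : TPair A N) : Prop :=
  ∃ V : Team A N, X = perfPair V

/-- The constant `0 = ({∅}, 𝒫(^N A))`. -/
def zeroP (A : Type*) (N : ℕ) : TPair A N := ({∅}, Set.univ)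

/-- The constant `1 = (𝒫(^N A), {∅})`. -/
def oneP (A : Type*) (N : ℕ) : TPair A N := (Set.univ, {∅})

/-- The diagonal element `D_ij`. -/
def diagP (A : Type*) {N : ℕ} (i j : Fin N) : TPair A N :=
  (Set.powerset {a : Fin N → A | a i = a j}, Set.powerset {a : Fin N → A | a i ≠ a j})

/-- Negation: `¬(X⁺, X⁻) = (X⁻, X⁺)`. -/
def negP {A : Type*} {N : ℕ} (X : TPair A N) : TPair A N := (X.2, X.1)

/-- The operation `+_∅`. -/
def addE {A : Type*} {N : ℕ} (X Y : TPair A N) : TPair A N :=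
  ({V | ∃ V₁ ∈ X.1, ∃ V₂ ∈ Y.1, Disjoint V₁ V₂ ∧ V₁ ∪ V₂ = V}, X.2 ∩ Y.2)

/-- The operation `·_∅`. -/
def mulE {A : Type*} {N : ℕ} (X Y : TPair A N) : TPair A N :=
  (X.1 ∩ Y.1, {W | ∃ W₁ ∈ X.2, ∃ W₂ ∈ Y.2, Disjoint W₁ W₂ ∧ W₁ ∪ W₂ = W})

/-- The `n`-variation of `V` by `f`: `V(n:f) = {a(n:f(a)) : a ∈ V}`. -/
def varF {A : Type*} {N : ℕ} (V : Team A N) (n : Fin N) (f : (Fin N → A) → A) : Team A N :=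
  (fun a => Function.update a n (f a)) '' V

/-- `V(n:A) = {a(n:b) : a ∈ V, b ∈ A}`. -/
def varAll {A : Type*} {N : ℕ} (V : Team A N) (n : Fin N) : Team A N :=
  {c | ∃ a ∈ V, ∃ b : A, c = Function.update a n b}

/-- The cylindrification `C_{n,∅}` (every `f : V → A` is independent of `∅`). -/
def cylE {A : Type*} {N : ℕ} (n : Fin N) (X : TPair A N) : TPair A N :=
  ({V | ∃ f : (Fin N → A) → A, varF V n f ∈ X.1}, {W | varAll W n ∈ X.2})

/-! The map `V ↦ (𝒫(V), 𝒫(Vᶜ))` is injective because `V` is the largest element of `𝒫(V)`,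
and each operation on pairs is the image of the corresponding set operation because a subset
of `V ∪ W` splits disjointly into a subset of `V` and one of `W`. For the cylindrification, a
valuation `c` lies in `V(n:A)` iff some `c(n:b)` lies in `V`; choosing such a `b` for every
`c ∈ U` gives the witness `f` with `U(n:f) ⊆ V`, and the same description shows that `U` is
disjoint from `V(n:A)` iff `U(n:A)` is disjoint from `V`. -/

open Set Function

lemma Set.subset_union_iff_exists_disjoint {α : Type*} {U V W : Set α} :
    U ⊆ V ∪ W ↔ ∃ U₁ ⊆ V, ∃ U₂ ⊆ W, Disjoint U₁ U₂ ∧ U₁ ∪ U₂ = U := by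
  constructor
  · intro hU
    refine ⟨U ∩ V, inter_subset_right, U \ V, ?_, disjoint_sdiff_inter.symm,
      inter_union_sdiff U V⟩
    exact fun a ⟨haU, haV⟩ => (hU haU).resolve_left haV
  · rintro ⟨U₁, h₁, U₂, h₂, -, rfl⟩
    exact union_subset_union h₁ h₂

section

variable {A : Type*} {N : ℕ}

lemma isSuit_powerset (V : Team A N) : IsSuit (𝒫 V) :=
  ⟨powerset_nonempty, fun _ _ hU hU' => hU'.trans hU⟩

lemma isDoubleSuit_perfPair (V : Team A N) : IsDoubleSuit (perfPair V) := by
  refine ⟨isSuit_powerset V, isSuit_powerset Vᶜ, ?_⟩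
  ext U
  simp only [perfPair, mem_inter_iff, mem_powerset_iff, subset_compl_iff_disjoint_right,
    mem_singleton_iff]
  exact ⟨fun ⟨hUV, hdisj⟩ => hdisj.eq_bot_of_le hUV,
    fun h => h ▸ ⟨empty_subset V, disjoint_bot_left⟩⟩

lemma perfPair_injective : Injective (perfPair : Team A N → TPair A N) := fun _ _ h =>
  (powerset_mono.1 (congrArg Prod.fst h).le).antisymm (powerset_mono.1 (congrArg Prod.fst h).ge)

lemma bijOn_perfPair :
    BijOn (perfPair : Team A N → TPair A N) univ {X | IsDoubleSuit X ∧ IsPerfect X} :=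
  ⟨fun V _ => ⟨isDoubleSuit_perfPair V, V, rfl⟩, perfPair_injective.injOn,
    fun _ ⟨_, V, hV⟩ => ⟨V, mem_univ V, hV.symm⟩⟩

lemma perfPair_empty : perfPair (∅ : Team A N) = zeroP A N := by
  simp only [perfPair, zeroP, powerset_empty, compl_empty, powerset_univ]

lemma perfPair_univ : perfPair (univ : Team A N) = oneP A N := by
  simp only [perfPair, oneP, powerset_empty, compl_univ, powerset_univ]

lemma perfPair_compl (V : Team A N) : perfPair Vᶜ = negP (perfPair V) := by
  simp only [perfPair, negP, compl_compl]

lemma perfPair_union (V W : Team A N) :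
    perfPair (V ∪ W) = addE (perfPair V) (perfPair W) := by
  refine Prod.ext ?_ (by simp only [perfPair, addE, compl_union, powerset_inter])
  ext U
  exact subset_union_iff_exists_disjoint

lemma perfPair_inter (V W : Team A N) :
    perfPair (V ∩ W) = mulE (perfPair V) (perfPair W) := by
  refine Prod.ext (by simp only [perfPair, mulE, powerset_inter]) ?_
  ext U
  simp only [perfPair, compl_inter]
  exact subset_union_iff_exists_disjoint

lemma mem_varAll_iff {V : Team A N} {n : Fin N} {c : Fin N → A} :
    c ∈ varAll V n ↔ ∃ b, update c n b ∈ V := by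
  constructor
  · rintro ⟨a, ha, b, rfl⟩
    exact ⟨a n, by rwa [update_idem, update_eq_self]⟩
  · rintro ⟨b, hb⟩
    exact ⟨update c n b, hb, c n, by rw [update_idem, update_eq_self]⟩

lemma update_mem_varAll_iff {V : Team A N} {n : Fin N} {c : Fin N → A} {b : A} :
    update c n b ∈ varAll V n ↔ c ∈ varAll V n := by
  simp only [mem_varAll_iff, update_idem]

lemma subset_varAll (V : Team A N) (n : Fin N) : V ⊆ varAll V n := fun c hc =>
  mem_varAll_iff.2 ⟨c n, by rwa [update_eq_self]⟩

lemma subset_varAll_iff_exists_varF_subset {U V : Team A N} {n : Fin N} :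
    U ⊆ varAll V n ↔ ∃ f, varF U n f ⊆ V := by
  constructor
  · intro hU
    have : ∀ c, ∃ b, c ∈ U → update c n b ∈ V := by
      intro c
      by_cases hc : c ∈ U
      · exact (mem_varAll_iff.1 (hU hc)).imp fun _ hb _ => hb
      · exact ⟨c n, fun h => absurd h hc⟩
    choose f hf using this
    exact ⟨f, image_subset_iff.2 hf⟩
  · rintro ⟨f, hf⟩ c hc
    exact mem_varAll_iff.2 ⟨f c, hf (mem_image_of_mem _ hc)⟩

lemma disjoint_varAll_of_disjoint {U V : Team A N} {n : Fin N} (h : Disjoint U (varAll V n)) :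
    Disjoint (varAll U n) V := by
  refine disjoint_left.2 fun c hcU hcV => ?_
  obtain ⟨b, hb⟩ := mem_varAll_iff.1 hcU
  exact disjoint_left.1 h hb (update_mem_varAll_iff.2 (subset_varAll V n hcV))

lemma disjoint_varAll_comm {U V : Team A N} {n : Fin N} :
    Disjoint U (varAll V n) ↔ Disjoint (varAll U n) V :=
  ⟨disjoint_varAll_of_disjoint, fun h => (disjoint_varAll_of_disjoint h.symm).symm⟩

lemma perfPair_varAll (V : Team A N) (n : Fin N) :
    perfPair (varAll V n) = cylE n (perfPair V) := by
  ext U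
  · exact subset_varAll_iff_exists_varF_subset
  · simp only [perfPair, cylE, mem_powerset_iff, mem_ofPred_eq, subset_compl_iff_disjoint_right]
    exact disjoint_varAll_comm

end

/-- The map `F(V) = (𝒫(V), 𝒫(^N A \ V))` is a bijection from the teams onto
the perfect double suits, and it is an isomorphism of cylindric-algebra
operations: it sends `∅` to `0`, `^N A` to `1`, diagonal sets to `D_ij`,
complement to `¬`, union to `+_∅`, intersection to `·_∅`, and the
cylindrification `V ↦ V(n:A)` to `C_{n,∅}`. -/
theorem perfPair_bijective_iso (A : Type*) (N : ℕ) :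
    Set.BijOn (perfPair : Team A N → TPair A N) Set.univ
      {X : TPair A N | IsDoubleSuit X ∧ IsPerfect X} ∧
    perfPair (∅ : Team A N) = zeroP A N ∧
    perfPair (Set.univ : Team A N) = oneP A N ∧
    (∀ i j : Fin N, perfPair {a : Fin N → A | a i = a j} = diagP A i j) ∧
    (∀ V : Team A N, perfPair Vᶜ = negP (perfPair V)) ∧
    (∀ V W : Team A N, perfPair (V ∪ W) = addE (perfPair V) (perfPair W)) ∧
    (∀ V W : Team A N, perfPair (V ∩ W) = mulE (perfPair V) (perfPair W)) ∧
    (∀ (V : Team A N) (n : Fin N), perfPair (varAll V n) = cylE n (perfPair V)) :=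
  ⟨bijOn_perfPair, perfPair_empty, perfPair_univ, fun _ _ => rfl, perfPair_compl,
    perfPair_union, perfPair_inter, perfPair_varAll⟩
end

section
/- Let φ be any IFG_N-formula over σ, 𝔄 a σ-structure with universe A, and V ⊆ ^N A a team. If 𝔄 ⊨⁺ φ[V] then 𝔄 ⊨⁺ φ_∅[V], and if 𝔄 ⊨⁻ φ[V] then 𝔄 ⊨⁻ φ_∅[V], where φ_∅ is the perfection of φ (perfection preserves winning strategies). -/
open FirstOrder

/-- `a ≈_J b` : the valuations `a` and `b` agree outside of `J`. -/
def AgreeOutside {A : Type*} {N : ℕ} (J : Set (Fin N)) (a b : Fin N → A) : Prop :=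
  ∀ i ∉ J, a i = b i

/-- `V = V₁ ∪_J V₂` : `V₁, V₂` form a `J`-saturated disjoint cover of `V`. -/
def CovJ {A : Type*} {N : ℕ} (J : Set (Fin N)) (V V₁ V₂ : Team A N) : Prop :=
  Disjoint V₁ V₂ ∧ V₁ ∪ V₂ = V ∧
  (∀ a ∈ V₁, ∀ b ∈ V, AgreeOutside J a b → b ∈ V₁) ∧
  (∀ a ∈ V₂, ∀ b ∈ V, AgreeOutside J a b → b ∈ V₂)

/-- `f` is independent of `J` on `V`. -/
def IndepOn {A : Type*} {N : ℕ} (J : Set (Fin N)) (V : Team A N)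
    (f : (Fin N → A) → A) : Prop :=
  ∀ a ∈ V, ∀ b ∈ V, AgreeOutside J a b → f a = f b

/-- IFG_N-formulas over the signature `L`: atomic first-order formulas
(equalities and relations between terms in the variables `v_0, …, v_{N-1}`),
closed under `∼ψ`, `ψ₁ ∨_J ψ₂`, and `∃v_n/J ψ`. -/
inductive IFG (L : Language) (N : ℕ) : Type _
  | equal (t₁ t₂ : L.Term (Fin N)) : IFG L N
  | rel {k : ℕ} (R : L.Relations k) (ts : Fin k → L.Term (Fin N)) : IFG L N
  | not (φ : IFG L N) : IFG L N
  | or (J : Set (Fin N)) (φ₁ φ₂ : IFG L N) : IFG L N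
  | ex (n : Fin N) (J : Set (Fin N)) (φ : IFG L N) : IFG L N

/-- Hodges' trump semantics: `Sat A φ true V` means `𝔄 ⊨⁺ φ[V]` (`V` is a trump),
and `Sat A φ false W` means `𝔄 ⊨⁻ φ[W]` (`W` is a cotrump). -/
def Sat {L : Language} {N : ℕ} (A : Type*) [L.Structure A] :
    IFG L N → Bool → Team A N → Prop
  | .equal t₁ t₂, true, V => ∀ a ∈ V, t₁.realize a = t₂.realize a
  | .equal t₁ t₂, false, W => ∀ a ∈ W, t₁.realize a ≠ t₂.realize a
  | .rel R ts, true, V => ∀ a ∈ V, Language.Structure.RelMap R (fun i => (ts i).realize a)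
  | .rel R ts, false, W => ∀ a ∈ W, ¬ Language.Structure.RelMap R (fun i => (ts i).realize a)
  | .not φ, b, V => Sat A φ (!b) V
  | .or J φ₁ φ₂, true, V =>
      ∃ V₁ V₂, CovJ J V V₁ V₂ ∧ Sat A φ₁ true V₁ ∧ Sat A φ₂ true V₂
  | .or _ φ₁ φ₂, false, W => Sat A φ₁ false W ∧ Sat A φ₂ false W
  | .ex n J φ, true, V =>
      ∃ f : (Fin N → A) → A, IndepOn J V f ∧ Sat A φ true (varF V n f)
  | .ex n _ φ, false, W => Sat A φ false (varAll W n)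

/-- The meaning `‖φ‖_𝔄 = ({V : 𝔄 ⊨⁺ φ[V]}, {W : 𝔄 ⊨⁻ φ[W]})`. -/
def meaning {L : Language} {N : ℕ} (A : Type*) [L.Structure A] (φ : IFG L N) :
    TPair A N :=
  ({V | Sat A φ true V}, {W | Sat A φ false W})

/-- An IFG-formula is perfect if all of its slash sets are empty. -/
def IFG.Perfect {L : Language} {N : ℕ} : IFG L N → Prop
  | .equal _ _ => True
  | .rel _ _ => True
  | .not φ => φ.Perfect
  | .or J φ₁ φ₂ => J = ∅ ∧ φ₁.Perfect ∧ φ₂.Perfect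
  | .ex _ J φ => J = ∅ ∧ φ.Perfect

/-- The perfection `φ_∅` of `φ`: replace every slash set by `∅`. -/
def IFG.perfection {L : Language} {N : ℕ} : IFG L N → IFG L N
  | .equal t₁ t₂ => .equal t₁ t₂
  | .rel R ts => .rel R ts
  | .not φ => .not φ.perfection
  | .or _ φ₁ φ₂ => .or ∅ φ₁.perfection φ₂.perfection
  | .ex n _ φ => .ex n ∅ φ.perfection

/-! Shrinking a slash set only weakens the side conditions of the positive clauses: agreeing
outside a smaller set is a stronger relation, so a cover saturated for `J` stays saturated and a
strategy independent of `J` stays independent. The negative clauses do not mention slash sets. -/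

section SlashMono

variable {A : Type*} {N : ℕ} {J J' : Set (Fin N)}

theorem AgreeOutside.mono (hJ : J' ⊆ J) {a b : Fin N → A} (h : AgreeOutside J' a b) :
    AgreeOutside J a b :=
  fun i hi => h i fun hi' => hi (hJ hi')

theorem CovJ.mono (hJ : J' ⊆ J) {V V₁ V₂ : Team A N} (h : CovJ J V V₁ V₂) :
    CovJ J' V V₁ V₂ :=
  let ⟨hdisj, hunion, hsat₁, hsat₂⟩ := h
  ⟨hdisj, hunion, fun a ha b hb hab => hsat₁ a ha b hb (hab.mono hJ),
    fun a ha b hb hab => hsat₂ a ha b hb (hab.mono hJ)⟩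

theorem IndepOn.mono (hJ : J' ⊆ J) {V : Team A N} {f : (Fin N → A) → A}
    (h : IndepOn J V f) : IndepOn J' V f :=
  fun a ha b hb hab => h a ha b hb (hab.mono hJ)

end SlashMono

theorem Sat.perfection {L : Language} {N : ℕ} {A : Type*} [L.Structure A] {φ : IFG L N} :
    ∀ {b : Bool} {V : Team A N}, Sat A φ b V → Sat A φ.perfection b V := by
  induction φ with
  | equal t₁ t₂ => exact id
  | rel R ts => exact id
  | not ψ ih => exact ih
  | or J φ₁ φ₂ ih₁ ih₂ =>
    rintro (_ | _) V
    · exact fun ⟨h₁, h₂⟩ => ⟨ih₁ h₁, ih₂ h₂⟩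
    · exact fun ⟨V₁, V₂, hcov, h₁, h₂⟩ =>
        ⟨V₁, V₂, hcov.mono (Set.empty_subset J), ih₁ h₁, ih₂ h₂⟩
  | ex n J ψ ih =>
    rintro (_ | _) V
    · exact ih
    · exact fun ⟨f, hf, h⟩ => ⟨f, hf.mono (Set.empty_subset J), ih h⟩

/-- Perfection preserves winning strategies: `𝔄 ⊨± φ[V]` implies `𝔄 ⊨± φ_∅[V]`. -/
theorem perfection_preserves_strategies {L : Language} {N : ℕ} (A : Type*)
    [L.Structure A] (φ : IFG L N) (V : Team A N) :
    (Sat A φ true V → Sat A φ.perfection true V) ∧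
    (Sat A φ false V → Sat A φ.perfection false V) :=
  ⟨Sat.perfection, Sat.perfection⟩
end
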